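/- arXiv:2104.06809 — 2 statements merged into one kernel-verified Lean document; each statement's English description precedes it below -/
import Mathlib

section
/- Let T(D) = Σ_{j=-μ}^{μ} T_j D^j be an n×n Laurent polynomial matrix over F. Suppose the sets of indices of nonzero columns of the coefficient matrices T_j (for j = -μ,...,μ) form a partition of {1,...,n}, and let d_j denote the number of nonzero columns of T_j. If det(T(D)) is a nonzero constant in F, then μ·d_{-μ} + ... + 2·d_{-2} + d_{-1} = d_1 + 2·d_2 + ... + μ·d_μ. -/
/-!
By the partition hypothesis, column `i` of `T(D)` is the single monomial `(T_j)_{·i} D^j` with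
`j = k i` the unique index whose coefficient matrix has a nonzero `i`-th column. Pulling `D^{k i}`
out of every column gives `det T(D) = det M · D^{∑ k i}` with `M` constant, so `det T(D)` is a
nonzero constant only if `∑ k i = ∑_j j d_j` vanishes; splitting this sum at `j = 0` is the claim.
-/

open LaurentPolynomial Classical

namespace LaurentPolynomial

variable {R : Type*}

theorem T_sum [CommSemiring R] {ι : Type*} (s : Finset ι) (k : ι → ℤ) :
    T (∑ b ∈ s, k b) = ∏ b ∈ s, (T (k b) : R[T;T⁻¹]) := by
  induction s using Finset.induction with
  | empty => rw [Finset.sum_empty, Finset.prod_empty, T_zero]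
  | insert _ _ h ih => rw [Finset.prod_insert h, Finset.sum_insert h, T_add, ih]

theorem exponent_eq_zero_of_C_mul_T_eq_C [Semiring R] {a b : R} {m : ℤ}
    (h : C a * T m = C b) (hb : b ≠ 0) : m = 0 := by
  rw [← single_eq_C_mul_T, ← mul_one (C b), ← T_zero, ← single_eq_C_mul_T] at h
  rcases AddMonoidAlgebra.single_inj.mp h with ⟨hm, -⟩ | ⟨-, hb0⟩
  · exact hm
  · exact absurd hb0 hb

variable [CommRing R] {ι : Type*} [Fintype ι] [DecidableEq ι]

theorem det_of_C_mul_T (M : Matrix ι ι R) (k : ι → ℤ) :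
    (Matrix.of fun a b => C (M a b) * T (k b)).det = C M.det * T (∑ b, k b) := by
  have hentry : (Matrix.of fun a b => C (M a b) * T (k b)) =
      Matrix.of fun a b => T (k b) * (C : R →+* R[T;T⁻¹]).mapMatrix M a b :=
    Matrix.ext fun a b => mul_comm (C (M a b)) (T (k b))
  rw [hentry, Matrix.det_mul_row, ← T_sum, ← RingHom.map_det, mul_comm]

theorem sum_eq_zero_of_det_of_C_mul_T_eq_C {M : Matrix ι ι R} {k : ι → ℤ} {c : R}
    (hdet : (Matrix.of fun a b => C (M a b) * T (k b)).det = C c) (hc : c ≠ 0) :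
    ∑ b, k b = 0 :=
  exponent_eq_zero_of_C_mul_T_eq_C (det_of_C_mul_T M k ▸ hdet) hc

end LaurentPolynomial

namespace Finset

theorem sum_eq_sum_mul_card_fiber {ι : Type*} [Fintype ι] {s : Finset ℤ} {k : ι → ℤ}
    (hk : ∀ b, k b ∈ s) : ∑ b, k b = ∑ j ∈ s, j * #{b | k b = j} := by
  rw [← sum_fiberwise_of_maps_to (fun b _ => hk b)]
  refine sum_congr rfl fun j _ => ?_
  rw [sum_congr rfl fun b hb => (mem_filter.mp hb).2, sum_const, nsmul_eq_mul, mul_comm]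

theorem sum_Icc_neg_mul (μ : ℕ) (f : ℤ → ℤ) :
    ∑ j ∈ Icc (-(μ : ℤ)) μ, j * f j =
      ∑ j ∈ Icc (1 : ℤ) μ, j * f j - ∑ j ∈ Icc (1 : ℤ) μ, j * f (-j) := by
  induction μ with
  | zero => simp
  | succ μ ih =>
    have hsplit : Icc (-((μ + 1 : ℕ) : ℤ)) (μ + 1 : ℕ) =
        insert (-((μ + 1 : ℕ) : ℤ)) (insert ((μ + 1 : ℕ) : ℤ) (Icc (-(μ : ℤ)) μ)) := by
      ext j
      simp only [mem_Icc, mem_insert]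
      omega
    have htop : Icc (1 : ℤ) (μ + 1 : ℕ) = insert ((μ + 1 : ℕ) : ℤ) (Icc (1 : ℤ) μ) := by
      ext j
      simp only [mem_Icc, mem_insert]
      omega
    rw [hsplit, sum_insert (by simp; omega), sum_insert (by simp), ih, htop, sum_insert (by simp),
      sum_insert (by simp)]
    ring

end Finset

theorem stmt9_general {F : Type*} [Field F] {n μ : ℕ}
    (Tc : ℤ → Matrix (Fin n) (Fin n) F)
    (hpart : ∀ i : Fin n, ∃! j : ℤ,
      j ∈ Finset.Icc (-(μ : ℤ)) (μ : ℤ) ∧ ∃ a : Fin n, Tc j a i ≠ 0)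
    (d : ℤ → ℕ)
    (hd : ∀ j : ℤ, d j = (Finset.univ.filter fun i : Fin n => ∃ a, Tc j a i ≠ 0).card)
    (hdet : ∃ c : F, c ≠ 0 ∧
      (Matrix.det fun a b : Fin n =>
        ∑ j ∈ Finset.Icc (-(μ : ℤ)) (μ : ℤ), C (Tc j a b) * T j) = C c) :
    (∑ j ∈ Finset.Icc (1 : ℤ) (μ : ℤ), j * d (-j)) =
      ∑ j ∈ Finset.Icc (1 : ℤ) (μ : ℤ), j * d j := by
  obtain ⟨c, hc, hdet⟩ := hdet
  choose k hk huniq using hpart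
  have hcol : (fun a b : Fin n => ∑ j ∈ Finset.Icc (-(μ : ℤ)) μ, C (Tc j a b) * T j) =
      Matrix.of fun a b => C (Tc (k b) a b) * T (k b) := by
    funext a b
    refine Finset.sum_eq_single_of_mem _ (hk b).1 fun j hj hne => ?_
    rw [not_not.mp fun h => hne (huniq b j ⟨hj, a, h⟩), map_zero, zero_mul]
  have hfiber : ∀ j ∈ Finset.Icc (-(μ : ℤ)) μ,
      (Finset.univ.filter fun b => k b = j).card = d j := fun j hj => by
    rw [hd]
    congr 1
    ext b
    simp only [Finset.mem_filter, Finset.mem_univ, true_and]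
    exact ⟨fun h => h ▸ (hk b).2, fun h => (huniq b j ⟨hj, h⟩).symm⟩
  have hbalance : ∑ j ∈ Finset.Icc (-(μ : ℤ)) μ, j * (d j : ℤ) = 0 := by
    rw [← LaurentPolynomial.sum_eq_zero_of_det_of_C_mul_T_eq_C (hcol ▸ hdet) hc,
      Finset.sum_eq_sum_mul_card_fiber fun b => (hk b).1]
    exact Finset.sum_congr rfl fun j hj => by rw [hfiber j hj]
  linarith [Finset.sum_Icc_neg_mul μ fun j => (d j : ℤ)]

/-- for `T(D) = Σ_{j=-μ}^{μ} T_j D^j` whose coefficient matrices have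
nonzero-column index sets forming a partition of `{1,…,n}`, with `d_j` the number of
nonzero columns of `T_j`, if `det T(D)` is a nonzero constant then
`μ d_{-μ} + ⋯ + d_{-1} = d_1 + ⋯ + μ d_μ`. -/
theorem stmt9 {F : Type*} [Field F] {n μ : ℕ} (hn : 1 ≤ n) (hμ : 1 ≤ μ)
    (Tc : ℤ → Matrix (Fin n) (Fin n) F)
    (hsupp : ∀ j : ℤ, j ∉ Finset.Icc (-(μ : ℤ)) (μ : ℤ) → Tc j = 0)
    (hpart : ∀ i : Fin n, ∃! j : ℤ,
      j ∈ Finset.Icc (-(μ : ℤ)) (μ : ℤ) ∧ ∃ a : Fin n, Tc j a i ≠ 0)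
    (d : ℤ → ℕ)
    (hd : ∀ j : ℤ, d j = (Finset.univ.filter fun i : Fin n => ∃ a, Tc j a i ≠ 0).card)
    (hdet : ∃ c : F, c ≠ 0 ∧
      (Matrix.det fun a b : Fin n =>
        ∑ j ∈ Finset.Icc (-(μ : ℤ)) (μ : ℤ), C (Tc j a b) * T j) = C c) :
    (∑ j ∈ Finset.Icc (1 : ℤ) (μ : ℤ), j * d (-j)) =
      ∑ j ∈ Finset.Icc (1 : ℤ) (μ : ℤ), j * d j :=
  stmt9_general Tc hpart d hd hdet
end

section
/- Suppose y(D) = u(D)G'(D) + e(D) where G'(D) = S(D) G T^{-1}(D) with T(D) an invertible Laurent polynomial matrix, S(D) a polynomial matrix with S_μ invertible, and G a generator matrix of a block code correcting t errors. If every coefficient of e(D)T(D) has weight ≤ t, then the decoder that (i) computes y(D)T(D) = u(D)S(D)G + e(D)T(D), (ii) decodes each coefficient with the block decoder to get the coefficients of u(D)S(D), and (iii) inverts S(D) recursively, recovers u(D) exactly. -/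
open Classical

/-- Hamming weight of a vector. -/
noncomputable def hwt {F : Type*} [Zero F] {n : ℕ} (v : Fin n → F) : ℕ :=
  (Finset.univ.filter fun i => v i ≠ 0).card

/-!
Multiplying the received sequence by `T(D)` gives `u(D)S(D)G + e(D)T(D)`, because
`P(D)T(D) = 1` turns `G'(D)T(D)` into `S(D)G`. Each coefficient is therefore a codeword
of `G` plus an error of weight at most `t`, so the block decoder returns exactly the
coefficients of `u(D)S(D)`. As `S(D)` starts in degree `μ`, the coefficient of degree `μ + i`
of `u(D)S(D)` is `u_i S_μ` plus terms involving only `u_0, …, u_{i-1}`; since `S_μ` is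
invertible, the recursion recovers `u` by strong induction.
-/

open Matrix

section Convolution

variable {R : Type*} [Semiring R] {m n : Type*} [Fintype n]

theorem conv_mul_eq_of_conv_eq_one [DecidableEq n] (I J : Finset ℤ) (A G' : ℤ → Matrix m n R)
    (P T : ℤ → Matrix n n R) (hA : ∀ i ∉ I, A i = 0)
    (hPT : ∀ l, ∑ j ∈ J, P (l - j) * T j = if l = 0 then 1 else 0)
    (hG' : ∀ l, G' l = ∑ i ∈ I, A i * P (l - i)) (l : ℤ) :
    ∑ j ∈ J, G' (l - j) * T j = A l := by
  calc ∑ j ∈ J, G' (l - j) * T j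
      = ∑ i ∈ I, A i * ∑ j ∈ J, P (l - i - j) * T j := by
        simp only [hG', Matrix.sum_mul, Matrix.mul_sum, Matrix.mul_assoc]
        rw [Finset.sum_comm]
        simp only [sub_right_comm l]
    _ = ∑ i ∈ I, if l = i then A i else 0 := by
        refine Finset.sum_congr rfl fun i _ => ?_
        simp only [hPT, sub_eq_zero]
        split_ifs <;> simp
    _ = A l := by
        rw [Finset.sum_ite_eq]
        split_ifs with hl
        · rfl
        · exact (hA l hl).symm

theorem conv_received_eq [Fintype m] (J : Finset ℤ) (I : Finset ℕ) (G : Matrix m n R)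
    (S : ℤ → Matrix m m R) (G' : ℤ → Matrix m n R) (T : ℤ → Matrix n n R)
    (hG'T : ∀ l, ∑ j ∈ J, G' (l - j) * T j = S l * G)
    (u : ℕ → m → R) (e y : ℤ → n → R)
    (hy : ∀ l, y l = ∑ i ∈ I, u i ᵥ* G' (l - i) + e l) (l : ℤ) :
    ∑ j ∈ J, y (l - j) ᵥ* T j
      = (∑ i ∈ I, u i ᵥ* S (l - i)) ᵥ* G + ∑ j ∈ J, e (l - j) ᵥ* T j := by
  simp only [hy, add_vecMul, Finset.sum_add_distrib, sum_vecMul, vecMul_vecMul,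
    ← hG'T, vecMul_sum, sub_right_comm l]
  rw [Finset.sum_comm]

theorem conv_coeff_eq_of_eq_zero_of_lt [Fintype m] (μ : ℤ) (S : ℤ → Matrix m m R)
    (hS : ∀ j < μ, S j = 0) (u : ℕ → m → R) {s i : ℕ} (hi : i ≤ s) :
    ∑ j ∈ Finset.range (s + 1), u j ᵥ* S (μ + i - j)
      = ∑ j ∈ Finset.range i, u j ᵥ* S (μ + i - j) + u i ᵥ* S μ := by
  have hvanish : ∀ j ∈ Finset.range (s + 1), j ∉ Finset.range (i + 1) →
      u j ᵥ* S (μ + i - j) = 0 := fun j _ hj => by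
    rw [hS _ (by simp only [Finset.mem_range] at hj; omega), vecMul_zero]
  rw [← Finset.sum_subset (Finset.range_subset_range.mpr (by omega)) hvanish,
    Finset.sum_range_succ, add_sub_cancel_right]

end Convolution

theorem recursive_inverse_eq {R : Type*} [CommRing R] {m : Type*} [Fintype m] [DecidableEq m]
    (μ : ℤ) (S : ℤ → Matrix m m R) (hS : ∀ j < μ, S j = 0) (hSμ : IsUnit (S μ).det)
    (s : ℕ) (u util : ℕ → m → R) (w : ℤ → m → R)
    (hw : ∀ l, w l = ∑ i ∈ Finset.range (s + 1), u i ᵥ* S (l - i))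
    (hutil : ∀ i : ℕ,
      util i = (w (μ + i) - ∑ j ∈ Finset.range i, util j ᵥ* S (μ + i - j)) ᵥ* (S μ)⁻¹) :
    ∀ i ≤ s, util i = u i := by
  intro i
  induction i using Nat.strong_induction_on with
  | _ i ih =>
    intro hi
    have hprev : ∑ j ∈ Finset.range i, util j ᵥ* S (μ + i - j)
        = ∑ j ∈ Finset.range i, u j ᵥ* S (μ + i - j) :=
      Finset.sum_congr rfl fun j hj => by
        rw [ih j (Finset.mem_range.mp hj) (by simp only [Finset.mem_range] at hj; omega)]
    rw [hutil, hw, hprev, conv_coeff_eq_of_eq_zero_of_lt μ S hS u hi, add_sub_cancel_left,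
      vecMul_vecMul, mul_nonsing_inv _ hSμ, vecMul_one]

theorem stmt16_general {F : Type*} [Field F] {k n t : ℕ} (μ : ℕ) (ν : ℤ)
    (G : Matrix (Fin k) (Fin n) F)
    (Dec : (Fin n → F) → (Fin k → F))
    (hDec : ∀ (v : Fin k → F) (w : Fin n → F),
      hwt w ≤ t → Dec (Matrix.vecMul v G + w) = v)
    (S : ℤ → Matrix (Fin k) (Fin k) F)
    (hSsupp : ∀ i : ℤ, i ∉ Finset.Icc (μ : ℤ) ν → S i = 0)
    (hSμ : IsUnit (S (μ : ℤ)).det)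
    (Tc Pc : ℤ → Matrix (Fin n) (Fin n) F)
    -- `P(D) T(D) = I`, coefficientwise
    (hPT : ∀ l : ℤ, (∑ j ∈ Finset.Icc (-(μ : ℤ)) (μ : ℤ), Pc (l - j) * Tc j) =
      if l = 0 then 1 else 0)
    -- `G'(D) = S(D) G T(D)⁻¹ = S(D) G P(D)`, coefficientwise
    (G' : ℤ → Matrix (Fin k) (Fin n) F)
    (hG' : ∀ l : ℤ, G' l = ∑ j ∈ Finset.Icc (μ : ℤ) ν, S j * G * Pc (l - j))
    (s : ℕ) (u : ℕ → Fin k → F)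
    (e : ℤ → Fin n → F)
    -- every coefficient of `e(D)T(D)` has weight at most `t`
    (herr : ∀ l : ℤ,
      hwt (∑ j ∈ Finset.Icc (-(μ : ℤ)) (μ : ℤ), Matrix.vecMul (e (l - j)) (Tc j)) ≤ t)
    -- the received sequence `y(D) = u(D)G'(D) + e(D)`
    (y : ℤ → Fin n → F)
    (hy : ∀ l : ℤ,
      y l = (∑ i ∈ Finset.range (s + 1), Matrix.vecMul (u i) (G' (l - i))) + e l)
    -- step (i)+(ii): decode each coefficient of `y(D)T(D)`
    (uhat : ℤ → Fin k → F)
    (huhat : ∀ l : ℤ, uhat l =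
      Dec (∑ j ∈ Finset.Icc (-(μ : ℤ)) (μ : ℤ), Matrix.vecMul (y (l - j)) (Tc j)))
    -- step (iii): invert `S(D)` recursively
    (util : ℕ → Fin k → F)
    (hutil : ∀ i : ℕ, util i =
      Matrix.vecMul
        (uhat ((μ : ℤ) + i) -
          ∑ j ∈ Finset.range i, Matrix.vecMul (util j) (S ((μ : ℤ) + i - j)))
        (S (μ : ℤ))⁻¹) :
    ∀ i : ℕ, i ≤ s → util i = u i := by
  have hG'T := conv_mul_eq_of_conv_eq_one _ _ (fun i => S i * G) G' Pc Tc
    (fun i hi => by rw [hSsupp i hi, Matrix.zero_mul]) hPT hG'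
  have huhat_eq : ∀ l, uhat l = ∑ i ∈ Finset.range (s + 1), u i ᵥ* S (l - i) := fun l => by
    rw [huhat, conv_received_eq _ _ G S G' Tc hG'T u e y hy l, hDec _ _ (herr l)]
  exact recursive_inverse_eq μ S (fun j hj => hSsupp j (by simp only [Finset.mem_Icc]; omega))
    hSμ s u util uhat huhat_eq hutil

/-- correctness of the decoder of the convolutional McEliece scheme.
`y(D) = u(D)G'(D) + e(D)` with `G'(D) = S(D) G T(D)⁻¹` (encoded by the coefficient
identities below), `S_μ` invertible, `T(D)` invertible over Laurent polynomials, `G`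
a generator matrix with decoder `Dec` correcting `t` errors, and every coefficient
of `e(D)T(D)` of weight at most `t`.  The decoder computes the coefficients of
`y(D)T(D)`, applies `Dec` to each to obtain the coefficients `û` of `u(D)S(D)`, and
recovers `u` by the recursion `ũ_i = (û_{μ+i} - Σ_{j<i} ũ_j S_{μ+i-j}) S_μ⁻¹`:
then `ũ_i = u_i` for all `i ≤ s`. -/
theorem stmt16 {F : Type*} [Field F] {k n t : ℕ} (μ : ℕ) (ν : ℤ) (hμν : (μ : ℤ) ≤ ν)
    (G : Matrix (Fin k) (Fin n) F)
    (Dec : (Fin n → F) → (Fin k → F))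
    (hDec : ∀ (v : Fin k → F) (w : Fin n → F),
      hwt w ≤ t → Dec (Matrix.vecMul v G + w) = v)
    (S : ℤ → Matrix (Fin k) (Fin k) F)
    (hSsupp : ∀ i : ℤ, i ∉ Finset.Icc (μ : ℤ) ν → S i = 0)
    (hSμ : IsUnit (S (μ : ℤ)).det)
    (Tc Pc : ℤ → Matrix (Fin n) (Fin n) F)
    (hTsupp : ∀ j : ℤ, j ∉ Finset.Icc (-(μ : ℤ)) (μ : ℤ) → Tc j = 0)
    (hPsupp : ∃ N : Finset ℤ, ∀ j ∉ N, Pc j = 0)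
    -- `T(D) P(D) = I`, coefficientwise
    (hTP : ∀ l : ℤ, (∑ j ∈ Finset.Icc (-(μ : ℤ)) (μ : ℤ), Tc j * Pc (l - j)) =
      if l = 0 then 1 else 0)
    -- `P(D) T(D) = I`, coefficientwise
    (hPT : ∀ l : ℤ, (∑ j ∈ Finset.Icc (-(μ : ℤ)) (μ : ℤ), Pc (l - j) * Tc j) =
      if l = 0 then 1 else 0)
    -- `G'(D) = S(D) G T(D)⁻¹ = S(D) G P(D)`, coefficientwise
    (G' : ℤ → Matrix (Fin k) (Fin n) F)
    (hG' : ∀ l : ℤ, G' l = ∑ j ∈ Finset.Icc (μ : ℤ) ν, S j * G * Pc (l - j))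
    (s : ℕ) (u : ℕ → Fin k → F) (hu : ∀ i : ℕ, s < i → u i = 0)
    (e : ℤ → Fin n → F)
    -- every coefficient of `e(D)T(D)` has weight at most `t`
    (herr : ∀ l : ℤ,
      hwt (∑ j ∈ Finset.Icc (-(μ : ℤ)) (μ : ℤ), Matrix.vecMul (e (l - j)) (Tc j)) ≤ t)
    -- the received sequence `y(D) = u(D)G'(D) + e(D)`
    (y : ℤ → Fin n → F)
    (hy : ∀ l : ℤ,
      y l = (∑ i ∈ Finset.range (s + 1), Matrix.vecMul (u i) (G' (l - i))) + e l)
    -- step (i)+(ii): decode each coefficient of `y(D)T(D)`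
    (uhat : ℤ → Fin k → F)
    (huhat : ∀ l : ℤ, uhat l =
      Dec (∑ j ∈ Finset.Icc (-(μ : ℤ)) (μ : ℤ), Matrix.vecMul (y (l - j)) (Tc j)))
    -- step (iii): invert `S(D)` recursively
    (util : ℕ → Fin k → F)
    (hutil : ∀ i : ℕ, util i =
      Matrix.vecMul
        (uhat ((μ : ℤ) + i) -
          ∑ j ∈ Finset.range i, Matrix.vecMul (util j) (S ((μ : ℤ) + i - j)))
        (S (μ : ℤ))⁻¹) :
    ∀ i : ℕ, i ≤ s → util i = u i :=
  stmt16_general μ ν G Dec hDec S hSsupp hSμ Tc Pc hPT G' hG' s u e herr y hy uhat huhat util hutil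
end
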